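/- Let α ∈ (1−1/d, 1], β = 1 + dα − d, and ν a finite measure on a cube of edge length r. Suppose the quantization errors satisfy: (i) monotonicity E^α(ν', N) ≤ E^α(ν, N) for ν' ≤ ν; (ii) subadditivity E^α(ν, N+M) ≤ E^α(ν', N) + E^α(ν−ν', M); and (iii) the small-measure bound E^α(σ, M) ≤ C r ‖σ‖^α M^{−β/d}. Then lim_{δ→0} liminf_{N→∞} N^{β/d} inf{E^α(ν', N) : ν' ≤ ν, ‖ν − ν'‖ ≤ δ} = liminf_{N→∞} N^{β/d} E^α(ν, N). -/

import Mathlib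

open MeasureTheory Set Filter

set_option maxHeartbeats 1600000

/-- monotone continuity of the rescaled quantization error — under
monotonicity, subadditivity and the small-measure bound for the abstract quantization
error `E`, one has
`lim_{δ→0} liminf_N N^{β/d}·inf{E(ν',N) : ν' ≤ ν, ‖ν−ν'‖ ≤ δ} = liminf_N N^{β/d}·E(ν,N)`. -/
theorem stmt9 (d : ℕ) (hd : 1 ≤ d) (α : ℝ) (hα : α ∈ Set.Ioc (1 - 1 / (d : ℝ)) 1)
    (β : ℝ) (hβ : β = 1 + d * α - d) (C : ℝ) (hC : 0 < C)
    (E : Measure (EuclideanSpace ℝ (Fin d)) → ℕ → ℝ)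
    (ν : Measure (EuclideanSpace ℝ (Fin d))) [IsFiniteMeasure ν]
    (r : ℝ) (hr : 0 < r) (a : EuclideanSpace ℝ (Fin d))
    (hsupp : ν {x | ¬ ∀ i, x i ∈ Set.Icc (a i) (a i + r)} = 0)
    (hmono : ∀ (ν' ν'' : Measure (EuclideanSpace ℝ (Fin d))) (N : ℕ),
      ν' ≤ ν'' → E ν' N ≤ E ν'' N)
    (hsub : ∀ (ν' : Measure (EuclideanSpace ℝ (Fin d))) (N M : ℕ),
      ν' ≤ ν → E ν (N + M) ≤ E ν' N + E (ν - ν') M)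
    (hsmall : ∀ (σ : Measure (EuclideanSpace ℝ (Fin d))) (M : ℕ), 1 ≤ M → σ ≤ ν →
      E σ M ≤ C * r * (σ Set.univ).toReal ^ α * (M : ℝ) ^ (-β / (d : ℝ))) :
    Tendsto (fun δ : ℝ =>
        liminf (fun N : ℕ => (N : ℝ) ^ (β / (d : ℝ)) *
          sInf ((fun ν' => E ν' N) ''
            {ν' | ν' ≤ ν ∧ (ν Set.univ).toReal - (ν' Set.univ).toReal ≤ δ})) atTop)
      (nhdsWithin 0 (Set.Ioi 0))
      (nhds (liminf (fun N : ℕ => (N : ℝ) ^ (β / (d : ℝ)) * E ν N) atTop)) := by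
  -- basic positivity facts
  have hd0 : (0:ℝ) < d := by exact_mod_cast Nat.lt_of_lt_of_le Nat.zero_lt_one hd
  have hd1 : (1:ℝ) ≤ d := by exact_mod_cast hd
  have hα0 : 0 < α := by
    have h1 : 1 / (d:ℝ) ≤ 1 := by
      rw [div_le_one hd0]; exact hd1
    have := hα.1; linarith
  have hβ0 : 0 < β := by
    have h1 : (d:ℝ) * (1 / d) = 1 := by field_simp
    have := hα.1
    have h2 : (d:ℝ) * (1 - 1/d) < d * α := by
      exact mul_lt_mul_of_pos_left this hd0
    rw [mul_sub, h1, mul_one] at h2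
    rw [hβ]; linarith
  set e : ℝ := β / (d:ℝ) with he_def
  have he : 0 < e := div_pos hβ0 hd0
  set m : ℝ := (ν Set.univ).toReal with hm_def
  have hm0 : 0 ≤ m := ENNReal.toReal_nonneg
  set B : ℝ := C * r * m ^ α with hB_def
  have hB0 : 0 ≤ B := by positivity
  set u : ℕ → ℝ := fun N => (N:ℝ) ^ e * E ν N with hu_def
  set S : ℝ → Set (Measure (EuclideanSpace ℝ (Fin d))) :=
    fun δ => {ν' | ν' ≤ ν ∧ (ν Set.univ).toReal - (ν' Set.univ).toReal ≤ δ} with hS_def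
  set g : ℝ → ℕ → ℝ := fun δ N => (N:ℝ) ^ e * sInf ((fun ν' => E ν' N) '' S δ) with hg_def
  -- ν itself belongs to `S δ` when `0 ≤ δ`
  have hνmem : ∀ δ : ℝ, 0 ≤ δ → ν ∈ S δ := by
    intro δ hδ
    exact ⟨le_refl ν, by simp [hδ]⟩
  -- the image sets are bounded below
  have hbddT : ∀ (N : ℕ) (δ : ℝ), BddBelow ((fun ν' => E ν' N) '' S δ) := by
    intro N δ
    refine ⟨E 0 N, ?_⟩
    rintro t ⟨ν', _, rfl⟩
    exact hmono 0 ν' N (Measure.zero_le ν')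
  -- pointwise upper bound `g δ N ≤ u N`
  have hg_le_u : ∀ δ : ℝ, 0 ≤ δ → ∀ N : ℕ, g δ N ≤ u N := by
    intro δ hδ N
    have h1 : sInf ((fun ν' => E ν' N) '' S δ) ≤ E ν N :=
      csInf_le (hbddT N δ) ⟨ν, hνmem δ hδ, rfl⟩
    exact mul_le_mul_of_nonneg_left h1 (Real.rpow_nonneg (Nat.cast_nonneg N) e)
  -- upper bound for `u`
  have hNcast_pos : ∀ N : ℕ, 1 ≤ N → (0:ℝ) < N := by
    intro N hN; exact_mod_cast Nat.lt_of_lt_of_le Nat.zero_lt_one hN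
  have hub : ∀ N : ℕ, 1 ≤ N → u N ≤ B := by
    intro N hN
    have hN0 : (0:ℝ) < N := hNcast_pos N hN
    have h1 := hsmall ν N hN (le_refl ν)
    have h2 : (N:ℝ) ^ e * E ν N ≤ (N:ℝ) ^ e * (C * r * m ^ α * (N:ℝ) ^ (-β / (d:ℝ))) :=
      mul_le_mul_of_nonneg_left h1 (Real.rpow_nonneg (le_of_lt hN0) e)
    have h3 : (N:ℝ) ^ (-β / (d:ℝ)) = (N:ℝ) ^ (-e) := by rw [neg_div]
    have h4 : (N:ℝ) ^ e * (N:ℝ) ^ (-e) = 1 := by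
      rw [Real.rpow_neg (le_of_lt hN0), mul_inv_cancel₀ (ne_of_gt (Real.rpow_pos_of_pos hN0 e))]
    calc u N ≤ (N:ℝ) ^ e * (C * r * m ^ α * (N:ℝ) ^ (-β / (d:ℝ))) := h2
      _ = C * r * m ^ α * ((N:ℝ) ^ e * (N:ℝ) ^ (-e)) := by rw [h3]; ring
      _ = B := by rw [h4, mul_one]
  have hubev : ∀ᶠ N in atTop, u N ≤ B := eventually_atTop.2 ⟨1, hub⟩
  by_cases hbdd : atTop.IsBoundedUnder (· ≥ ·) u
  case neg =>
    -- the junk-value case: both liminfs are `sSup ∅ = 0`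
    have hLu : liminf u atTop = 0 := by
      rw [liminf_eq]
      have : {a : ℝ | ∀ᶠ N in atTop, a ≤ u N} = ∅ := by
        rw [eq_empty_iff_forall_notMem]
        intro a ha
        exact hbdd ⟨a, eventually_map.2 ha⟩
      rw [this, Real.sSup_empty]
    have hLg : ∀ δ : ℝ, 0 ≤ δ → liminf (g δ) atTop = 0 := by
      intro δ hδ
      rw [liminf_eq]
      have : {a : ℝ | ∀ᶠ N in atTop, a ≤ g δ N} = ∅ := by
        rw [eq_empty_iff_forall_notMem]
        intro a ha
        refine hbdd ⟨a, eventually_map.2 ?_⟩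
        filter_upwards [ha] with N hN
        exact hN.trans (hg_le_u δ hδ N)
      rw [this, Real.sSup_empty]
    have hcongr : (fun δ : ℝ => liminf (g δ) atTop) =ᶠ[nhdsWithin 0 (Set.Ioi 0)]
        (fun _ : ℝ => (0:ℝ)) := by
      filter_upwards [self_mem_nhdsWithin] with δ hδ
      exact hLg δ (le_of_lt hδ)
    rw [show liminf u atTop = 0 from hLu] at *
    exact Tendsto.congr' hcongr.symm tendsto_const_nhds
  case pos =>
    obtain ⟨b, hb⟩ := hbdd
    rw [eventually_map] at hb
    -- hb : ∀ᶠ N in atTop, b ≤ u N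
    -- KEY estimate
    have key : ∀ l : ℝ, 0 < l → ∀ δ : ℝ, 0 < δ → ∀ᶠ N : ℕ in atTop,
        u (N + ⌈l * (N:ℝ)⌉₊) - ((1 - (1+2*l) ^ (-e)) * B + C * r * δ ^ α * l ^ (-e))
          ≤ g δ N := by
      intro l hl δ hδ
      filter_upwards [eventually_ge_atTop 1, eventually_ge_atTop ⌈1/l⌉₊] with N hN1 hNl
      set M : ℕ := ⌈l * (N:ℝ)⌉₊ with hM_def
      set K : ℕ := N + M with hK_def
      have hN0 : (0:ℝ) < N := hNcast_pos N hN1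
      have hNe_pos : (0:ℝ) < (N:ℝ) ^ e := Real.rpow_pos_of_pos hN0 e
      have hlN1 : (1:ℝ) ≤ l * N := by
        have h1 : (1/l : ℝ) ≤ N := le_trans (Nat.le_ceil _) (by exact_mod_cast hNl)
        rw [div_le_iff₀ hl] at h1
        calc (1:ℝ) = l * (1/l) := by field_simp
          _ ≤ l * ((N:ℝ) * l / l) := by
            apply mul_le_mul_of_nonneg_left _ (le_of_lt hl)
            rw [mul_div_assoc, div_self (ne_of_gt hl), mul_one]
            calc (1/l : ℝ) = 1/l := rfl
              _ ≤ N := by rw [div_le_iff₀ hl]; exact h1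
          _ = l * N := by rw [mul_div_assoc, div_self (ne_of_gt hl), mul_one]
      have hlN0 : (0:ℝ) < l * N := by positivity
      have hM_lb : l * (N:ℝ) ≤ M := Nat.le_ceil _
      have hM_ub : (M:ℝ) ≤ 2 * l * N := by
        have := Nat.ceil_lt_add_one (le_of_lt hlN0)
        have h2 : (M:ℝ) < l * N + 1 := this
        nlinarith
      have hM1 : 1 ≤ M := by
        have : (1:ℝ) ≤ M := le_trans hlN1 hM_lb
        exact_mod_cast this
      have hK1 : 1 ≤ K := le_trans hN1 (Nat.le_add_right N M)
      have hKcast : (K:ℝ) = (N:ℝ) + M := by exact_mod_cast rfl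
      have hK0 : (0:ℝ) < K := hNcast_pos K hK1
      have hKub : (K:ℝ) ≤ (1+2*l) * N := by rw [hKcast]; nlinarith
      have hNK : (N:ℝ) ≤ K := by rw [hKcast]; linarith [(Nat.cast_nonneg M : (0:ℝ) ≤ M)]
      -- per-measure estimate
      have hper : ∀ ν' ∈ S δ,
          (N:ℝ) ^ e * E ν K - C * r * δ ^ α * l ^ (-e) ≤ (N:ℝ) ^ e * E ν' N := by
        intro ν' hν'
        obtain ⟨hν'le, hν'mass⟩ := hν'
        haveI : IsFiniteMeasure ν' := isFiniteMeasure_of_le ν hν'le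
        have hσmass : ((ν - ν') Set.univ).toReal = m - (ν' Set.univ).toReal := by
          rw [Measure.sub_apply MeasurableSet.univ hν'le,
            ENNReal.toReal_sub_of_le (hν'le Set.univ) (measure_ne_top ν _)]
        have hσδ : ((ν - ν') Set.univ).toReal ≤ δ := by rw [hσmass]; exact hν'mass
        have hsm := hsmall (ν - ν') M hM1 Measure.sub_le
        have hα_mono : ((ν - ν') Set.univ).toReal ^ α ≤ δ ^ α :=
          Real.rpow_le_rpow ENNReal.toReal_nonneg hσδ (le_of_lt hα0)
        have hMe : (M:ℝ) ^ (-β / (d:ℝ)) = (M:ℝ) ^ (-e) := by rw [neg_div]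
        have hM_mono : (M:ℝ) ^ (-e) ≤ (l * N) ^ (-e) :=
          Real.rpow_le_rpow_of_nonpos hlN0 hM_lb (by linarith)
        have hsm2 : E (ν - ν') M ≤ C * r * δ ^ α * (l * N) ^ (-e) := by
          calc E (ν - ν') M ≤ C * r * ((ν - ν') Set.univ).toReal ^ α * (M:ℝ) ^ (-e) := by
                rw [← hMe]; exact hsm
            _ ≤ C * r * δ ^ α * (l * N) ^ (-e) := by
                apply mul_le_mul (mul_le_mul_of_nonneg_left hα_mono (by positivity)) hM_mono
                  (by positivity) (by positivity)
        have hmulr : (l * (N:ℝ)) ^ (-e) = l ^ (-e) * (N:ℝ) ^ (-e) :=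
          Real.mul_rpow (le_of_lt hl) (le_of_lt hN0)
        have hEK : E ν K ≤ E ν' N + C * r * δ ^ α * (l ^ (-e) * (N:ℝ) ^ (-e)) := by
          calc E ν K ≤ E ν' N + E (ν - ν') M := hsub ν' N M hν'le
            _ ≤ E ν' N + C * r * δ ^ α * (l * N) ^ (-e) := by linarith
            _ = E ν' N + C * r * δ ^ α * (l ^ (-e) * (N:ℝ) ^ (-e)) := by rw [hmulr]
        have hNee : (N:ℝ) ^ e * (N:ℝ) ^ (-e) = 1 := by
          rw [Real.rpow_neg (le_of_lt hN0), mul_inv_cancel₀ (ne_of_gt hNe_pos)]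
        have := mul_le_mul_of_nonneg_left hEK (le_of_lt hNe_pos)
        have hexp : (N:ℝ) ^ e * (E ν' N + C * r * δ ^ α * (l ^ (-e) * (N:ℝ) ^ (-e)))
            = (N:ℝ) ^ e * E ν' N + C * r * δ ^ α * l ^ (-e) * ((N:ℝ) ^ e * (N:ℝ) ^ (-e)) := by
          ring
        rw [hexp, hNee, mul_one] at this
        linarith
      -- pass to the infimum
      have hsInf : (N:ℝ) ^ e * E ν K - C * r * δ ^ α * l ^ (-e)
          ≤ g δ N := by
        have hne : ((fun ν' => E ν' N) '' S δ).Nonempty := ⟨E ν N, ν, hνmem δ (le_of_lt hδ), rfl⟩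
        have h1 : ((N:ℝ) ^ e * E ν K - C * r * δ ^ α * l ^ (-e)) / (N:ℝ) ^ e
            ≤ sInf ((fun ν' => E ν' N) '' S δ) := by
          apply le_csInf hne
          rintro t ⟨ν', hν'S, rfl⟩
          rw [div_le_iff₀ hNe_pos]
          have := hper ν' hν'S
          linarith [mul_comm ((N:ℝ) ^ e) (E ν' N)]
        have h2 := (div_le_iff₀' hNe_pos).1 h1
        exact h2
      -- replace `N^e * E ν K` by `u K` up to the factor
      set t : ℝ := ((N:ℝ) / K) ^ e with ht_def
      have htK : t * (K:ℝ) ^ e = (N:ℝ) ^ e := by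
        rw [← Real.mul_rpow (by positivity) (le_of_lt hK0), div_mul_cancel₀ _ (ne_of_gt hK0)]
      have htu : (N:ℝ) ^ e * E ν K = t * u K := by
        rw [hu_def]; dsimp only; rw [← htK]; ring
      set ρ : ℝ := (1+2*l) ^ (-e) with hρ_def
      have hρt : ρ ≤ t := by
        have h12l : (0:ℝ) < 1 + 2*l := by linarith
        have hinv : (1+2*l)⁻¹ ≤ (N:ℝ) / K := by
          rw [inv_eq_one_div, div_le_div_iff₀ h12l hK0]
          nlinarith
        have : ρ = ((1+2*l)⁻¹) ^ e := by
          rw [hρ_def, Real.rpow_neg (le_of_lt h12l), ← Real.inv_rpow (le_of_lt h12l)]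
        rw [this]
        exact Real.rpow_le_rpow (by positivity) hinv (le_of_lt he)
      have ht1 : t ≤ 1 :=
        Real.rpow_le_one (by positivity) ((div_le_one hK0).2 hNK) (le_of_lt he)
      have hρ1 : ρ ≤ 1 :=
        Real.rpow_le_one_of_one_le_of_nonpos (by linarith) (by linarith)
      have huKB : u K ≤ B := hub K hK1
      have hD : u K - (1 - ρ) * B ≤ (N:ℝ) ^ e * E ν K := by
        rw [htu]
        have h1 : (1 - t) * u K ≤ (1 - t) * B :=
          mul_le_mul_of_nonneg_left huKB (by linarith)
        have h2 : (1 - t) * B ≤ (1 - ρ) * B :=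
          mul_le_mul_of_nonneg_right (by linarith) hB0
        nlinarith
      linarith
    -- main lower estimate for the liminf
    have main : ∀ l : ℝ, 0 < l → ∀ δ : ℝ, 0 < δ →
        liminf u atTop - ((1 - (1+2*l) ^ (-e)) * B + C * r * δ ^ α * l ^ (-e))
          ≤ liminf (g δ) atTop := by
      intro l hl δ hδ
      set c : ℝ := (1 - (1+2*l) ^ (-e)) * B + C * r * δ ^ α * l ^ (-e) with hc_def
      set ψ : ℕ → ℕ := fun N => N + ⌈l * (N:ℝ)⌉₊ with hψ_def
      have hψ : Tendsto ψ atTop atTop :=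
        tendsto_atTop_mono (fun N => Nat.le_add_right N _) tendsto_id
      have hbψ : ∀ᶠ N in atTop, b ≤ u (ψ N) := hψ.eventually hb
      have hubψ : ∀ᶠ N in atTop, u (ψ N) ≤ B := hψ.eventually hubev
      -- step 1 : liminf u ≤ liminf (u ∘ ψ)
      have hmaple : map ψ atTop ≤ atTop := hψ
      have step1 : liminf u atTop ≤ liminf (fun N => u (ψ N)) atTop := by
        have h1 : liminf u atTop ≤ liminf u (map ψ atTop) :=
          liminf_le_liminf_of_le hmaple ⟨b, eventually_map.2 hb⟩
            (isCoboundedUnder_ge_of_eventually_le _ (eventually_map.2 hubψ))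
        have h2 : liminf u (map ψ atTop) = liminf (fun N => u (ψ N)) atTop := by
          rw [liminf_eq, liminf_eq]
          simp only [eventually_map]
        linarith
      -- step 2 : subtract the constant
      have step2 : liminf (fun N => u (ψ N) - c) atTop
          = liminf (fun N => u (ψ N)) atTop - c := by
        have := liminf_add_const atTop (fun N => u (ψ N)) (-c)
          (isCoboundedUnder_ge_of_eventually_le _ hubψ) ⟨b, eventually_map.2 hbψ⟩
        simpa [sub_eq_add_neg] using this
      -- step 3 : compare with g δ
      have step3 : liminf (fun N => u (ψ N) - c) atTop ≤ liminf (g δ) atTop := by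
        refine liminf_le_liminf (key l hl δ hδ) ?_ ?_
        · exact ⟨b - c, eventually_map.2 (by filter_upwards [hbψ] with N hN; linarith)⟩
        · exact isCoboundedUnder_ge_of_eventually_le _
            (by filter_upwards [hubev] with N hN
                exact (hg_le_u δ (le_of_lt hδ) N).trans hN)
      linarith [step1, step2 ▸ step3]
    -- upper estimate
    have upper : ∀ δ : ℝ, 0 < δ → liminf (g δ) atTop ≤ liminf u atTop := by
      intro δ hδ
      refine liminf_le_liminf (Eventually.of_forall (hg_le_u δ (le_of_lt hδ))) ?_ ?_
      · have hbψ1 : ∀ᶠ N : ℕ in atTop, b ≤ u (N + ⌈(1:ℝ) * (N:ℝ)⌉₊) := by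
          have hψ1 : Tendsto (fun N : ℕ => N + ⌈(1:ℝ) * (N:ℝ)⌉₊) atTop atTop :=
            tendsto_atTop_mono (fun N => Nat.le_add_right N _) tendsto_id
          exact hψ1.eventually hb
        refine ⟨b - ((1 - (1+2*1) ^ (-e)) * B + C * r * δ ^ α * (1:ℝ) ^ (-e)),
          eventually_map.2 ?_⟩
        filter_upwards [key 1 one_pos δ hδ, hbψ1] with N h1 h2
        linarith
      · exact IsBoundedUnder.isCoboundedUnder_ge ⟨B, eventually_map.2 hubev⟩
    -- conclusion via an ε-argument
    rw [Metric.tendsto_nhds]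
    intro ε hε
    -- choose l with (1 - (1+2l)^(-e)) * B < ε/2
    have hcont : Tendsto (fun l : ℝ => (1 - (1+2*l) ^ (-e)) * B) (nhdsWithin 0 (Set.Ioi 0))
        (nhds 0) := by
      have h0 : Tendsto (fun l : ℝ => 1 + 2*l) (nhds 0) (nhds 1) := by
        have hc : Continuous fun l : ℝ => 1 + 2*l := by continuity
        simpa using hc.tendsto 0
      have h1 : Tendsto (fun l : ℝ => (1+2*l) ^ (-e)) (nhds 0) (nhds ((1:ℝ) ^ (-e))) :=
        (Real.continuousAt_rpow_const 1 (-e) (Or.inl one_ne_zero)).tendsto.comp h0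
      have h2 : Tendsto (fun l : ℝ => (1 - (1+2*l) ^ (-e)) * B) (nhds 0)
          (nhds ((1 - (1:ℝ) ^ (-e)) * B)) :=
        (tendsto_const_nhds.sub h1).mul tendsto_const_nhds
      rw [Real.one_rpow] at h2
      simp only [sub_self, zero_mul] at h2
      exact h2.mono_left nhdsWithin_le_nhds
    have hev1 : ∀ᶠ l in nhdsWithin (0:ℝ) (Set.Ioi 0),
        (1 - (1+2*l) ^ (-e)) * B < ε/2 :=
      hcont.eventually_lt_const (by linarith)
    obtain ⟨l, hlε, hl0⟩ := (hev1.and self_mem_nhdsWithin).exists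
    replace hl0 : 0 < l := hl0
    -- choose δ₀ with C*r*δ^α*l^(-e) < ε/2 for δ < δ₀
    set Kc : ℝ := C * r * l ^ (-e) with hKc_def
    have hKc0 : 0 < Kc := by
      have := Real.rpow_pos_of_pos hl0 (-e)
      positivity
    set τ : ℝ := ε / (2 * Kc) with hτ_def
    have hτ0 : 0 < τ := by positivity
    set δ₀ : ℝ := τ ^ (α⁻¹) with hδ₀_def
    have hδ₀0 : 0 < δ₀ := Real.rpow_pos_of_pos hτ0 _
    have hδ₀α : δ₀ ^ α = τ := by
      rw [hδ₀_def, ← Real.rpow_mul (le_of_lt hτ0), inv_mul_cancel₀ (ne_of_gt hα0),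
        Real.rpow_one]
    filter_upwards [Ioo_mem_nhdsGT hδ₀0] with δ hδIoo
    obtain ⟨hδ0, hδlt⟩ := hδIoo
    have hup := upper δ hδ0
    have hlow := main l hl0 δ hδ0
    have hδα : δ ^ α < τ := by
      rw [← hδ₀α]
      exact Real.rpow_lt_rpow (le_of_lt hδ0) hδlt hα0
    have hterm2 : C * r * δ ^ α * l ^ (-e) < ε/2 := by
      have h1 : C * r * δ ^ α * l ^ (-e) = Kc * δ ^ α := by rw [hKc_def]; ring
      have h2 : Kc * δ ^ α < Kc * τ := by
        exact mul_lt_mul_of_pos_left hδα hKc0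
      have h3 : Kc * τ = ε/2 := by
        rw [hτ_def]; field_simp
      rw [h1]; linarith
    rw [Real.dist_eq, abs_sub_lt_iff]
    constructor
    · linarith
    · linarith
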